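/- Let D : [0,∞) → [0,∞) be non-decreasing and right-continuous with critical bid b* for target I > 0 (D(b*) ≥ I, D(b) < I for b < b*), and suppose D(b*) > I and D⁻(b*) > 0. Then no pure strategy (single bid value with a single weight γ ≤ 1) can achieve the lower bound I·b* − ∫₀^{b*} D(u) du if D is discontinuous at b*, i.e., the cost of every feasible pure strategy strictly exceeds I·b* − ∫₀^{b*} D(u) du, while mixed two-bid strategies achieve costs arbitrarily close to it. -/

import Mathlib

/-!
Only bids `b ≥ b*` are feasible for a pure strategy, and since `D` is monotone a bid `b` with unit
weight costs at least `D b · b* − ∫₀^{b*} D`. The cheapest feasible weight is `k = I / D b < 1`, so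
every feasible pure strategy costs at least `I·b* − k ∫₀^{b*} D`, strictly more than the bound
because `∫₀^{b*} D > 0`. A mix of the bid `b*` with a bid `c < b*`, with weights chosen to buy
exactly `I` impressions, costs `I·b* − ∫₀^{b*} D` in the limit `c → b*⁻`.
-/

open MeasureTheory Topology Filter

noncomputable def bidCost (D : ℝ → ℝ) (b : ℝ) : ℝ :=
  D b * b - ∫ u in (0 : ℝ)..b, D u

section Monotone

variable {D : ℝ → ℝ} (hD : Monotone D)
include hD

theorem Monotone.intervalIntegral_le_mul {a b : ℝ} (hab : a ≤ b) :
    ∫ u in a..b, D u ≤ (b - a) * D b := by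
  simpa using intervalIntegral.integral_mono_on hab (hD.intervalIntegrable (μ := volume))
    intervalIntegrable_const fun u hu => hD hu.2

theorem Monotone.bidCost_nonneg {b : ℝ} (hb : 0 ≤ b) : 0 ≤ bidCost D b := by
  have := hD.intervalIntegral_le_mul hb
  rw [bidCost]
  linarith

theorem Monotone.mul_sub_integral_le_bidCost {b' b : ℝ} (h : b' ≤ b) :
    D b * b' - ∫ u in (0 : ℝ)..b', D u ≤ bidCost D b := by
  have hsplit := intervalIntegral.integral_add_adjacent_intervals
    (hD.intervalIntegrable (μ := volume) (a := 0) (b := b'))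
    (hD.intervalIntegrable (b := b))
  have := hD.intervalIntegral_le_mul h
  rw [bidCost, ← hsplit]
  linarith

theorem Monotone.intervalIntegral_pos {b c : ℝ} (hnn : ∀ u, 0 ≤ D u) (hc : 0 ≤ c)
    (hcb : c < b) (hDc : 0 < D c) : 0 < ∫ u in (0 : ℝ)..b, D u := by
  rw [← intervalIntegral.integral_add_adjacent_intervals
    (hD.intervalIntegrable (μ := volume) (a := 0) (b := c)) hD.intervalIntegrable]
  have hhead : 0 ≤ ∫ u in (0 : ℝ)..c, D u :=
    intervalIntegral.integral_nonneg hc fun u _ => hnn u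
  have htail : 0 < ∫ u in c..b, D u :=
    intervalIntegral.intervalIntegral_pos_of_pos_on hD.intervalIntegrable
      (fun u hu => hDc.trans_le (hD hu.1.le)) hcb
  linarith

theorem Monotone.tendsto_bidCost_nhdsLT {b L : ℝ} (hL : Tendsto D (𝓝[<] b) (𝓝 L)) :
    Tendsto (bidCost D) (𝓝[<] b) (𝓝 (L * b - ∫ u in (0 : ℝ)..b, D u)) := by
  have hprim := intervalIntegral.continuous_primitive
    (fun _ _ => hD.intervalIntegrable (μ := volume)) (0 : ℝ)
  exact (hL.mul (tendsto_id.mono_left nhdsWithin_le_nhds)).sub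
    (hprim.continuousAt.tendsto.mono_left nhdsWithin_le_nhds)

end Monotone

theorem div_sub_mul_add_one_sub_div_sub_mul {I a d : ℝ} (h : d ≠ a) :
    (I - d) / (a - d) * a + (1 - (I - d) / (a - d)) * d = I := by
  have : a - d ≠ 0 := sub_ne_zero.mpr h.symm
  field_simp
  ring

theorem Monotone.lt_mul_bidCost_of_feasible {D : ℝ → ℝ} (hD : Monotone D) (hnn : ∀ b, 0 ≤ D b)
    {I bstar : ℝ} (hI : 0 < I) (hDbstar : I < D bstar)
    (hcrit : ∀ b, 0 ≤ b → b < bstar → D b < I) (hA : 0 < ∫ u in (0 : ℝ)..bstar, D u)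
    {γ bid : ℝ} (hbid : 0 ≤ bid) (hγ : γ ≤ 1) (hfeas : I ≤ γ * D bid) :
    I * bstar - (∫ u in (0 : ℝ)..bstar, D u) < γ * bidCost D bid := by
  have hbstar_le : bstar ≤ bid := by
    by_contra! h
    nlinarith [hcrit bid hbid h, hnn bid]
  have hDbid : 0 < D bid := hI.trans (hDbstar.trans_le (hD hbstar_le))
  set k := I / D bid
  have hkD : k * D bid = I := div_mul_cancel₀ I hDbid.ne'
  have hk1 : k < 1 := (div_lt_one hDbid).2 (hDbstar.trans_le (hD hbstar_le))
  have hkγ : k ≤ γ := (div_le_iff₀ hDbid).2 hfeas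
  calc I * bstar - (∫ u in (0 : ℝ)..bstar, D u)
      < I * bstar - k * ∫ u in (0 : ℝ)..bstar, D u := by nlinarith
    _ = k * (D bid * bstar - ∫ u in (0 : ℝ)..bstar, D u) := by rw [← hkD]; ring
    _ ≤ k * bidCost D bid :=
      mul_le_mul_of_nonneg_left (hD.mul_sub_integral_le_bidCost hbstar_le)
        (div_pos hI hDbid).le
    _ ≤ γ * bidCost D bid := mul_le_mul_of_nonneg_right hkγ (hD.bidCost_nonneg hbid)

theorem Monotone.exists_two_bid_cost_lt {D : ℝ → ℝ} (hD : Monotone D) {I bstar Dminus : ℝ}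
    (hbstarpos : 0 < bstar) (hDbstar : I < D bstar) (hcrit : ∀ b, 0 ≤ b → b < bstar → D b < I)
    (hDminus : Tendsto D (𝓝[<] bstar) (𝓝 Dminus)) (hdisc : Dminus < D bstar)
    {ε : ℝ} (hε : 0 < ε) :
    ∃ b₁ b₂ γ₁ γ₂ : ℝ, 0 ≤ b₁ ∧ 0 ≤ b₂ ∧ 0 ≤ γ₁ ∧ 0 ≤ γ₂ ∧ γ₁ + γ₂ ≤ 1 ∧
      I ≤ γ₁ * D b₁ + γ₂ * D b₂ ∧
      γ₁ * bidCost D b₁ + γ₂ * bidCost D b₂ < I * bstar - (∫ u in (0 : ℝ)..bstar, D u) + ε := by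
  set w : ℝ → ℝ := fun c => (I - D c) / (D bstar - D c)
  have hw : Tendsto w (𝓝[<] bstar) (𝓝 ((I - Dminus) / (D bstar - Dminus))) :=
    (tendsto_const_nhds.sub hDminus).div (tendsto_const_nhds.sub hDminus)
      (sub_ne_zero.2 hdisc.ne')
  have hcost : Tendsto (fun c => w c * bidCost D bstar + (1 - w c) * bidCost D c) (𝓝[<] bstar)
      (𝓝 (I * bstar - ∫ u in (0 : ℝ)..bstar, D u)) := by
    convert (hw.mul_const (bidCost D bstar)).add
      ((tendsto_const_nhds.sub hw).mul (hD.tendsto_bidCost_nhdsLT hDminus)) using 2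
    unfold bidCost
    linear_combination (-bstar) * div_sub_mul_add_one_sub_div_sub_mul (I := I) hdisc.ne
  obtain ⟨c, hc_lt, hc_pos, hc_lt_bstar⟩ :=
    ((hcost.eventually_lt_const (lt_add_of_pos_right _ hε)).and (Ioo_mem_nhdsLT hbstarpos)).exists
  have hDc : D c < I := hcrit c hc_pos.le hc_lt_bstar
  have hden : 0 < D bstar - D c := by linarith
  refine ⟨bstar, c, w c, 1 - w c, hbstarpos.le, hc_pos.le, ?_, ?_, by linarith, ?_, hc_lt⟩
  · exact div_nonneg (by linarith) hden.le
  · exact sub_nonneg.2 ((div_le_one hden).2 (by linarith))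
  · exact (div_sub_mul_add_one_sub_div_sub_mul (hDc.trans hDbstar).ne).ge

theorem stmt17_general (D : ℝ → ℝ) (hmono : Monotone D)
    (hnn : ∀ b, 0 ≤ D b) (I : ℝ) (hI : 0 < I)
    (bstar : ℝ) (hbstarpos : 0 < bstar)
    (hDbstar : I < D bstar)
    (hcrit : ∀ b, 0 ≤ b → b < bstar → D b < I)
    (Dminus : ℝ) (hDminus : Filter.Tendsto D (𝓝[<] bstar) (𝓝 Dminus))
    (hDminuspos : 0 < Dminus) (hdisc : Dminus < D bstar) :
    (∀ γ bid : ℝ, 0 ≤ bid → 0 ≤ γ → γ ≤ 1 → I ≤ γ * D bid →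
      I * bstar - (∫ u in (0:ℝ)..bstar, D u) <
        γ * (D bid * bid - ∫ u in (0:ℝ)..bid, D u)) ∧
    (∀ ε : ℝ, 0 < ε → ∃ b₁ b₂ γ₁ γ₂ : ℝ,
      0 ≤ b₁ ∧ 0 ≤ b₂ ∧ 0 ≤ γ₁ ∧ 0 ≤ γ₂ ∧ γ₁ + γ₂ ≤ 1 ∧
      I ≤ γ₁ * D b₁ + γ₂ * D b₂ ∧
      γ₁ * (D b₁ * b₁ - ∫ u in (0:ℝ)..b₁, D u) +
          γ₂ * (D b₂ * b₂ - ∫ u in (0:ℝ)..b₂, D u) <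
        (I * bstar - (∫ u in (0:ℝ)..bstar, D u)) + ε) := by
  have hA : 0 < ∫ u in (0 : ℝ)..bstar, D u := by
    obtain ⟨c, hDc, hc_pos, hc_lt⟩ :=
      ((hDminus.eventually_const_lt hDminuspos).and (Ioo_mem_nhdsLT hbstarpos)).exists
    exact hmono.intervalIntegral_pos hnn hc_pos.le hc_lt hDc
  exact ⟨fun γ bid hbid _ hγ hfeas =>
      hmono.lt_mul_bidCost_of_feasible hnn hI hDbstar hcrit hA hbid hγ hfeas,
    fun ε hε => hmono.exists_two_bid_cost_lt hbstarpos hDbstar hcrit hDminus hdisc hε⟩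

/-- If the supply curve `D` is discontinuous at its critical bid `b* > 0`
for target `I` (i.e. `D⁻(b*) < D b*`, with `D b* > I` and `D⁻(b*) > 0`), then every
feasible pure strategy costs strictly more than the lower bound `I·b* − ∫₀^{b*} D`, while
two-bid mixed strategies achieve costs arbitrarily close to it. -/
theorem stmt17 (D : ℝ → ℝ) (hmono : Monotone D)
    (hrc : ∀ a : ℝ, ContinuousWithinAt D (Set.Ici a) a)
    (hnn : ∀ b, 0 ≤ D b) (I : ℝ) (hI : 0 < I)
    (bstar : ℝ) (hbstarpos : 0 < bstar)
    (hDbstar : I < D bstar)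
    (hcrit : ∀ b, 0 ≤ b → b < bstar → D b < I)
    (Dminus : ℝ) (hDminus : Filter.Tendsto D (𝓝[<] bstar) (𝓝 Dminus))
    (hDminuspos : 0 < Dminus) (hdisc : Dminus < D bstar) :
    (∀ γ bid : ℝ, 0 ≤ bid → 0 ≤ γ → γ ≤ 1 → I ≤ γ * D bid →
      I * bstar - (∫ u in (0:ℝ)..bstar, D u) <
        γ * (D bid * bid - ∫ u in (0:ℝ)..bid, D u)) ∧
    (∀ ε : ℝ, 0 < ε → ∃ b₁ b₂ γ₁ γ₂ : ℝ,
      0 ≤ b₁ ∧ 0 ≤ b₂ ∧ 0 ≤ γ₁ ∧ 0 ≤ γ₂ ∧ γ₁ + γ₂ ≤ 1 ∧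
      I ≤ γ₁ * D b₁ + γ₂ * D b₂ ∧
      γ₁ * (D b₁ * b₁ - ∫ u in (0:ℝ)..b₁, D u) +
          γ₂ * (D b₂ * b₂ - ∫ u in (0:ℝ)..b₂, D u) <
        (I * bstar - (∫ u in (0:ℝ)..bstar, D u)) + ε) :=
  stmt17_general D hmono hnn I hI bstar hbstarpos hDbstar hcrit Dminus hDminus hDminuspos hdisc
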